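/- Let n ≥ 1, Q = 2n+2, and let μ be an upper Ahlfors regular measure on ℍⁿ. For α, β ≥ 0 let Q_{α,β} = {(z,t) ∈ ℍⁿ : |z| ≤ α, |t| ≤ β}. Then there exists c > 0 such that for every (ρ,τ) ∈ ℍⁿ and all α, β ≥ 0, μ((ρ,τ)∘Q_{α,β}) ≤ c·α^{2n}·β, where (ρ,τ)∘Q_{α,β} = {(w,s) : (ρ,τ)⁻¹∘(w,s) ∈ Q_{α,β}}. -/

import Mathlib

open MeasureTheory Complex

noncomputable section

/-- The Heisenberg group `ℍⁿ` as a set: `ℂⁿ × ℝ`. -/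
abbrev Heis (n : ℕ) : Type := (Fin n → ℂ) × ℝ

/-- Euclidean norm of a point of `ℂⁿ`. -/
def znorm {n : ℕ} (z : Fin n → ℂ) : ℝ := Real.sqrt (∑ j, ‖z j‖ ^ 2)

/-- The Heisenberg group operation
`(z,t)∘(w,s) = (z+w, t+s+(1/2)·Im(z·w̄))`. -/
def Hmul {n : ℕ} (p q : Heis n) : Heis n :=
  (p.1 + q.1, p.2 + q.2 + (1 / 2) * (∑ j, p.1 j * (starRingEnd ℂ) (q.1 j)).im)

/-- The Heisenberg group inverse `(z,t)⁻¹ = (−z,−t)`. -/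
def Hinv {n : ℕ} (p : Heis n) : Heis n := (-p.1, -p.2)

/-- The Korányi norm `‖(z,t)‖ = (|z|⁴+t²)^{1/4}`. -/
def koranyi {n : ℕ} (p : Heis n) : ℝ := (znorm p.1 ^ 4 + p.2 ^ 2) ^ ((1 : ℝ) / 4)

/-- The Korányi distance `dist((z,t),(w,s)) = ‖(z,t)⁻¹∘(w,s)‖`. -/
def Hdist {n : ℕ} (p q : Heis n) : ℝ := koranyi (Hmul (Hinv p) q)

/-- The Heisenberg ball `𝔅_r(p)` of radius `r` centered at `p`. -/
def Hball {n : ℕ} (p : Heis n) (r : ℝ) : Set (Heis n) := {q | Hdist p q < r}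

/-- The set `B_ρ = {(z,t) : |z| ≤ ρ, |t| ≤ ρ²}`. -/
def Hbox (n : ℕ) (ρ : ℝ) : Set (Heis n) := {p | znorm p.1 ≤ ρ ∧ |p.2| ≤ ρ ^ 2}

/-- Left translate of a set: `p ∘ S = {q : p⁻¹∘q ∈ S}`. -/
def Htranslate {n : ℕ} (p : Heis n) (S : Set (Heis n)) : Set (Heis n) :=
  {q | Hmul (Hinv p) q ∈ S}

/-- The discrepancy
`D_N(z,t;ρ) = Σ_{j=1}^N χ_{(z,t)∘B_ρ}(ζⱼ,τⱼ) − N·μ((z,t)∘B_ρ)`. -/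
def disc {n : ℕ} (μ : Measure (Heis n)) {N : ℕ} (pts : Fin N → Heis n)
    (p : Heis n) (ρ : ℝ) : ℝ :=
  (∑ j, (Htranslate p (Hbox n ρ)).indicator (fun _ => (1 : ℝ)) (pts j))
    - N * (μ (Htranslate p (Hbox n ρ))).toReal

/-- The box `Q_{α,β} = {(z,t) ∈ ℍⁿ : |z| ≤ α, |t| ≤ β}`. -/
def Qbox (n : ℕ) (α β : ℝ) : Set (Heis n) := {p | znorm p.1 ≤ α ∧ |p.2| ≤ β}

/-!
Cover `Q_{α,β}` by Korányi balls of radius `r` centred on a grid of horizontal mesh `≈ r / n`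
and vertical mesh `≈ r²`. A ball of radius `r` contains the box `Q_{r/2, r²/4}` around its
centre, and the shear `Im(z·w̄) / 2` of the group law moves the vertical coordinate by at most
`(α + r) r`, so `≈ (α / r)^{2n} (β + (α + r) r) / r²` balls suffice, each of measure at most
`c₀ r^{2n+2}`. Left invariance of the distance carries the cover over to `p∘Q_{α,β}`, which
gives `μ(p∘Q_{α,β}) ≲ c₀ (α + r)^{2n} (β + (α + r) r + r²)`; let `r → 0`.
-/

open Filter Topology

namespace Heisenberg

variable {n : ℕ}

def sympForm (z w : Fin n → ℂ) : ℝ := (∑ j, z j * (starRingEnd ℂ) (w j)).im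

lemma sympForm_add_right (z x y : Fin n → ℂ) :
    sympForm z (x + y) = sympForm z x + sympForm z y := by
  simp [sympForm, mul_add, Finset.sum_add_distrib]

lemma sympForm_add_left (x y w : Fin n → ℂ) :
    sympForm (x + y) w = sympForm x w + sympForm y w := by
  simp [sympForm, add_mul, Finset.sum_add_distrib]

lemma sympForm_neg_left (z w : Fin n → ℂ) : sympForm (-z) w = -sympForm z w := by
  simp [sympForm]

lemma sympForm_neg_right (z w : Fin n → ℂ) : sympForm z (-w) = -sympForm z w := by
  simp [sympForm]

lemma sympForm_self (z : Fin n → ℂ) : sympForm z z = 0 := by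
  simp [sympForm, Complex.im_sum, Complex.mul_conj]

lemma sympForm_comm (z w : Fin n → ℂ) : sympForm w z = -sympForm z w := by
  rw [sympForm, sympForm, ← Complex.conj_im, map_sum]
  simp [mul_comm]

lemma Hmul_eq (p q : Heis n) :
    Hmul p q = (p.1 + q.1, p.2 + q.2 + 1 / 2 * sympForm p.1 q.1) := rfl

lemma Hmul_Hinv_cancel_left (p q : Heis n) : Hmul p (Hmul (Hinv p) q) = q := by
  refine Prod.ext (by simp [Hmul_eq, Hinv]) ?_
  simp only [Hmul_eq, Hinv, sympForm_add_right, sympForm_neg_left, sympForm_neg_right,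
    sympForm_self]
  ring

lemma Hinv_Hmul_Hmul_left (p a b : Heis n) :
    Hmul (Hinv (Hmul p a)) (Hmul p b) = Hmul (Hinv a) b := by
  refine Prod.ext (by simp [Hmul_eq, Hinv]) ?_
  simp only [Hmul_eq, Hinv, neg_add, sympForm_add_left, sympForm_add_right, sympForm_neg_left,
    sympForm_self, sympForm_comm p.1 a.1]
  ring

lemma Hdist_Hmul_left (p a b : Heis n) : Hdist (Hmul p a) (Hmul p b) = Hdist a b := by
  rw [Hdist, Hdist, Hinv_Hmul_Hmul_left]

lemma znorm_eq_norm_toLp (z : Fin n → ℂ) : znorm z = ‖WithLp.toLp 2 z‖ := by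
  simp [znorm, EuclideanSpace.norm_eq]

lemma znorm_nonneg (z : Fin n → ℂ) : 0 ≤ znorm z := Real.sqrt_nonneg _

lemma znorm_add_le (z w : Fin n → ℂ) : znorm (z + w) ≤ znorm z + znorm w := by
  simpa only [znorm_eq_norm_toLp, WithLp.toLp_add] using norm_add_le _ _

lemma znorm_sub_comm (z w : Fin n → ℂ) : znorm (z - w) = znorm (w - z) := by
  simp only [znorm_eq_norm_toLp, WithLp.toLp_sub, norm_sub_rev]

lemma norm_le_znorm (z : Fin n → ℂ) (j : Fin n) : ‖z j‖ ≤ znorm z := by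
  simpa [znorm_eq_norm_toLp] using PiLp.norm_apply_le (WithLp.toLp 2 z) j

lemma znorm_le_of_forall_norm_le {z : Fin n → ℂ} {ε : ℝ} (hε : 0 ≤ ε)
    (hz : ∀ j, ‖z j‖ ≤ ε) : znorm z ≤ √n * ε := by
  calc znorm z ≤ √(∑ _j : Fin n, ε ^ 2) :=
        Real.sqrt_le_sqrt (Finset.sum_le_sum fun j _ => pow_le_pow_left₀ (norm_nonneg _) (hz j) 2)
    _ = √n * ε := by simp [Real.sqrt_sq hε]

lemma abs_sympForm_le (z w : Fin n → ℂ) : |sympForm z w| ≤ znorm z * znorm w := by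
  have hinner : ∑ j, z j * (starRingEnd ℂ) (w j) = inner ℂ (WithLp.toLp 2 w) (WithLp.toLp 2 z) := by
    simp [PiLp.inner_apply]
  calc |sympForm z w| ≤ ‖inner ℂ (WithLp.toLp 2 w) (WithLp.toLp 2 z)‖ := by
        rw [sympForm, hinner]; exact Complex.abs_im_le_norm _
    _ ≤ znorm z * znorm w := by
        rw [znorm_eq_norm_toLp, znorm_eq_norm_toLp, mul_comm]; exact norm_inner_le_norm _ _

lemma koranyi_lt_of_le {x : Heis n} {r : ℝ} (hr : 0 < r) (hz : znorm x.1 ≤ r / 2)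
    (ht : |x.2| ≤ r ^ 2 / 4) : koranyi x < r := by
  have hz4 : znorm x.1 ^ 4 ≤ (r / 2) ^ 4 := pow_le_pow_left₀ (znorm_nonneg _) hz 4
  have ht2 : x.2 ^ 2 ≤ (r ^ 2 / 4) ^ 2 := by
    rw [← sq_abs]; exact pow_le_pow_left₀ (abs_nonneg _) ht 2
  have hsum : znorm x.1 ^ 4 + x.2 ^ 2 < r ^ 4 := by nlinarith [pow_pos hr 4]
  rw [koranyi, one_div, Real.rpow_inv_lt_iff_of_pos (by positivity) hr.le (by norm_num)]
  exact_mod_cast hsum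

def grid (a h : ℝ) : Finset ℝ :=
  (Finset.Icc (-⌈a / h⌉₊ : ℤ) ⌈a / h⌉₊).image fun k : ℤ => k * h

lemma exists_mem_grid_abs_sub_le {a h x : ℝ} (hh : 0 < h) (hx : |x| ≤ a) :
    ∃ g ∈ grid a h, |x - g| ≤ h / 2 := by
  have hround := abs_sub_round (x / h)
  refine ⟨round (x / h) * h, Finset.mem_image_of_mem _ ?_, ?_⟩
  · have hlt : |(round (x / h) : ℝ)| < ⌈a / h⌉₊ + 1 := by
      have hxh : |x / h| ≤ a / h := by
        rw [abs_div, abs_of_pos hh]; exact div_le_div_of_nonneg_right hx hh.le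
      have := abs_sub_abs_le_abs_sub (round (x / h) : ℝ) (x / h)
      rw [abs_sub_comm] at this
      linarith [Nat.le_ceil (a / h)]
    have : |round (x / h)| ≤ ⌈a / h⌉₊ := by
      rw [← Int.lt_add_one_iff]; exact_mod_cast hlt
    exact Finset.mem_Icc.mpr (abs_le.mp this)
  · calc |x - round (x / h) * h| = |x / h - round (x / h)| * h := by
          rw [← abs_of_pos hh, ← abs_mul, abs_of_pos hh, sub_mul, div_mul_cancel₀ _ hh.ne']
      _ ≤ h / 2 := by nlinarith

lemma card_grid_le {a h : ℝ} (ha : 0 ≤ a) (hh : 0 < h) : ((grid a h).card : ℝ) ≤ 2 * a / h + 3 := by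
  have hcard : ((Finset.Icc (-⌈a / h⌉₊ : ℤ) ⌈a / h⌉₊).card : ℝ) = 2 * ⌈a / h⌉₊ + 1 := by
    rw [Int.card_Icc,
      show (⌈a / h⌉₊ : ℤ) + 1 - -⌈a / h⌉₊ = ((2 * ⌈a / h⌉₊ + 1 : ℕ) : ℤ) by push_cast; ring,
      Int.toNat_natCast]
    push_cast; ring
  calc ((grid a h).card : ℝ) ≤ (Finset.Icc (-⌈a / h⌉₊ : ℤ) ⌈a / h⌉₊).card := by
        exact_mod_cast Finset.card_image_le
    _ ≤ 2 * a / h + 3 := by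
        rw [hcard]; linarith [Nat.ceil_lt_add_one (div_nonneg ha hh.le), mul_div_assoc 2 a h]

def cgrid (a h : ℝ) : Finset ℂ := (grid a h ×ˢ grid a h).map Complex.equivRealProd.symm.toEmbedding

lemma exists_mem_cgrid_norm_sub_le {a h : ℝ} {z : ℂ} (hh : 0 < h) (hz : ‖z‖ ≤ a) :
    ∃ g ∈ cgrid a h, ‖z - g‖ ≤ h := by
  obtain ⟨x, hx, hxz⟩ := exists_mem_grid_abs_sub_le hh ((abs_re_le_norm z).trans hz)
  obtain ⟨y, hy, hyz⟩ := exists_mem_grid_abs_sub_le hh ((abs_im_le_norm z).trans hz)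
  refine ⟨⟨x, y⟩, Finset.mem_map_of_mem _ (Finset.mk_mem_product hx hy), ?_⟩
  calc ‖z - ⟨x, y⟩‖ ≤ |z.re - x| + |z.im - y| := norm_le_abs_re_add_abs_im _
    _ ≤ h := by linarith

lemma card_cgrid (a h : ℝ) : (cgrid a h).card = (grid a h).card ^ 2 := by
  simp [cgrid, sq]

variable (n) in
def zgrid (a h : ℝ) : Finset (Fin n → ℂ) := Fintype.piFinset fun _ => cgrid a h

lemma exists_mem_zgrid_znorm_sub_le {a h : ℝ} {z : Fin n → ℂ} (hh : 0 < h) (hz : znorm z ≤ a) :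
    ∃ g ∈ zgrid n a h, znorm (z - g) ≤ √n * h := by
  choose g hg hgz using fun j => exists_mem_cgrid_norm_sub_le hh ((norm_le_znorm z j).trans hz)
  exact ⟨g, Fintype.mem_piFinset.mpr hg, znorm_le_of_forall_norm_le hh.le hgz⟩

lemma card_zgrid (a h : ℝ) : (zgrid n a h).card = (grid a h).card ^ (2 * n) := by
  simp [zgrid, card_cgrid, pow_mul]

variable (n) in
/-- The horizontal mesh `r / (2(n+1))` makes the grid `r / 2`-dense in `z`, the vertical mesh
`r² / 2` makes it `r² / 4`-dense in `t`, and the vertical range `β + (α + r) r` absorbs the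
shear `Im(z·w̄) / 2` of the group law. -/
def hgrid (α β r : ℝ) : Finset (Heis n) :=
  zgrid n α (r / (2 * (n + 1))) ×ˢ grid (β + (α + r) * r) (r ^ 2 / 2)

lemma exists_mem_hgrid_Hdist_lt {α β r : ℝ} {b : Heis n} (hr : 0 < r) (hb : b ∈ Qbox n α β) :
    ∃ g ∈ hgrid n α β r, Hdist g b < r := by
  obtain ⟨z, hzg, hbz⟩ :=
    exists_mem_zgrid_znorm_sub_le (h := r / (2 * (n + 1))) (by positivity) hb.1
  replace hbz : znorm (b.1 - z) ≤ r / 2 := by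
    refine hbz.trans ?_
    rw [mul_div, div_le_div_iff₀ (by positivity) (by norm_num)]
    nlinarith [Real.sqrt_le_sqrt (show (n : ℝ) ≤ (n + 1) ^ 2 by nlinarith),
      Real.sqrt_sq (show (0 : ℝ) ≤ n + 1 by positivity)]
  have hz : znorm z ≤ α + r := by
    have := znorm_add_le (z - b.1) b.1
    rw [sub_add_cancel, znorm_sub_comm] at this
    linarith [hb.1]
  set w := b.2 - 1 / 2 * sympForm z b.1
  have hw : |w| ≤ β + (α + r) * r := by
    have hshear : |sympForm z b.1| ≤ (α + r) * (r / 2) := by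
      rw [← sub_add_cancel b.1 z, sympForm_add_right, sympForm_self, add_zero]
      exact (abs_sympForm_le _ _).trans
        (mul_le_mul hz hbz (znorm_nonneg _) (by linarith [znorm_nonneg z]))
    have : |w| ≤ |b.2| + 1 / 2 * |sympForm z b.1| := by
      simpa only [abs_mul, abs_of_pos (by norm_num : (0 : ℝ) < 1 / 2)]
        using abs_sub b.2 (1 / 2 * sympForm z b.1)
    nlinarith [hb.2, znorm_nonneg z]
  obtain ⟨t, htg, hwt⟩ := exists_mem_grid_abs_sub_le (h := r ^ 2 / 2) (by positivity) hw
  refine ⟨(z, t), Finset.mk_mem_product hzg htg, koranyi_lt_of_le hr ?_ ?_⟩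
  · simpa [Hmul_eq, Hinv, neg_add_eq_sub] using hbz
  · have hvert : (Hmul (Hinv (z, t)) b).2 = w - t := by
      simp only [Hmul_eq, Hinv, sympForm_neg_left, w]; ring
    rw [hvert]; linarith

lemma card_hgrid_mul_le {α β r : ℝ} (hα : 0 ≤ α) (hβ : 0 ≤ β) (hr : 0 < r) :
    ((hgrid n α β r).card : ℝ) * r ^ (2 * n + 2) ≤
      (4 * (n + 1) * α + 3 * r) ^ (2 * n) * (4 * (β + (α + r) * r) + 3 * r ^ 2) := by
  have hhor : ((grid α (r / (2 * (n + 1)))).card : ℝ) * r ≤ 4 * (n + 1) * α + 3 * r := by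
    calc _ ≤ (2 * α / (r / (2 * (n + 1))) + 3) * r := by
          gcongr; exact card_grid_le hα (by positivity)
      _ = 4 * (n + 1) * α + 3 * r := by field_simp; ring
  have hvert : ((grid (β + (α + r) * r) (r ^ 2 / 2)).card : ℝ) * r ^ 2 ≤
      4 * (β + (α + r) * r) + 3 * r ^ 2 := by
    calc _ ≤ (2 * (β + (α + r) * r) / (r ^ 2 / 2) + 3) * r ^ 2 := by
          gcongr; exact card_grid_le (by positivity) (by positivity)
      _ = 4 * (β + (α + r) * r) + 3 * r ^ 2 := by field_simp; ring
  calc ((hgrid n α β r).card : ℝ) * r ^ (2 * n + 2)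
      = (((grid α (r / (2 * (n + 1)))).card : ℝ) * r) ^ (2 * n) *
          (((grid (β + (α + r) * r) (r ^ 2 / 2)).card : ℝ) * r ^ 2) := by
        simp only [hgrid, Finset.card_product, card_zgrid]; push_cast; ring
    _ ≤ _ := by gcongr

lemma measure_le_of_subset_biUnion_Hball {μ : Measure (Heis n)} {c₀ r : ℝ} {Q : ℕ}
    (hA : ∀ (p : Heis n) (r : ℝ), 0 < r → μ (Hball p r) ≤ ENNReal.ofReal (c₀ * r ^ Q))
    {ι : Type*} {G : Finset ι} {center : ι → Heis n} {s : Set (Heis n)} (hr : 0 < r)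
    (hs : s ⊆ ⋃ i ∈ G, Hball (center i) r) :
    μ s ≤ ENNReal.ofReal (G.card * (c₀ * r ^ Q)) :=
  calc μ s ≤ ∑ i ∈ G, μ (Hball (center i) r) :=
        (measure_mono hs).trans (measure_biUnion_finset_le G _)
    _ ≤ ∑ _i ∈ G, ENNReal.ofReal (c₀ * r ^ Q) := Finset.sum_le_sum fun i _ => hA _ r hr
    _ = ENNReal.ofReal (G.card * (c₀ * r ^ Q)) := by
        rw [Finset.sum_const, nsmul_eq_mul, ENNReal.ofReal_mul (Nat.cast_nonneg _),
          ENNReal.ofReal_natCast]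

lemma Htranslate_Qbox_subset (p : Heis n) {α β r : ℝ} (hr : 0 < r) :
    Htranslate p (Qbox n α β) ⊆ ⋃ g ∈ hgrid n α β r, Hball (Hmul p g) r := by
  intro q hq
  obtain ⟨g, hg, hgq⟩ := exists_mem_hgrid_Hdist_lt hr hq
  refine Set.mem_biUnion hg ?_
  show Hdist (Hmul p g) q < r
  rwa [← Hmul_Hinv_cancel_left p q, Hdist_Hmul_left]

lemma measure_Htranslate_Qbox_le {μ : Measure (Heis n)} {c₀ : ℝ} (hc₀ : 0 ≤ c₀)
    (hA : ∀ (p : Heis n) (r : ℝ), 0 < r → μ (Hball p r) ≤ ENNReal.ofReal (c₀ * r ^ (2 * n + 2)))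
    (p : Heis n) {α β r : ℝ} (hα : 0 ≤ α) (hβ : 0 ≤ β) (hr : 0 < r) :
    μ (Htranslate p (Qbox n α β)) ≤ ENNReal.ofReal
      (c₀ * ((4 * (n + 1) * α + 3 * r) ^ (2 * n) * (4 * (β + (α + r) * r) + 3 * r ^ 2))) := by
  refine (measure_le_of_subset_biUnion_Hball hA hr (Htranslate_Qbox_subset p hr)).trans ?_
  refine ENNReal.ofReal_le_ofReal ?_
  rw [mul_left_comm]
  exact mul_le_mul_of_nonneg_left (card_hgrid_mul_le hα hβ hr) hc₀

end Heisenberg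

theorem measure_translated_box_le_general
    (n : ℕ) (μ : Measure (Heis n)) (c₀ : ℝ) (hc₀ : 0 < c₀)
    (hAhlfors : ∀ (p : Heis n) (r : ℝ), 0 < r →
      μ (Hball p r) ≤ ENNReal.ofReal (c₀ * r ^ (2 * n + 2))) :
    ∃ c > (0 : ℝ), ∀ (p : Heis n) (α β : ℝ), 0 ≤ α → 0 ≤ β →
      μ (Htranslate p (Qbox n α β)) ≤ ENNReal.ofReal (c * α ^ (2 * n) * β) := by
  refine ⟨4 * (4 * (n + 1)) ^ (2 * n) * c₀, by positivity, fun p α β hα hβ => ?_⟩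
  have hlim : Tendsto (fun r : ℝ => ENNReal.ofReal
      (c₀ * ((4 * (n + 1) * α + 3 * r) ^ (2 * n) * (4 * (β + (α + r) * r) + 3 * r ^ 2))))
      (𝓝[>] 0) (𝓝 (ENNReal.ofReal (4 * (4 * (n + 1)) ^ (2 * n) * c₀ * α ^ (2 * n) * β))) := by
    refine tendsto_nhdsWithin_of_tendsto_nhds ((ENNReal.continuous_ofReal.tendsto _).comp ?_)
    convert (by fun_prop : Continuous fun r : ℝ =>
      c₀ * ((4 * (n + 1) * α + 3 * r) ^ (2 * n) * (4 * (β + (α + r) * r) + 3 * r ^ 2))).tendsto 0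
      using 2
    simp only [mul_zero, add_zero, ne_eq, OfNat.ofNat_ne_zero, not_false_eq_true,
      zero_pow, mul_pow]
    ring
  exact ge_of_tendsto hlim (eventually_nhdsWithin_of_forall fun r hr =>
    Heisenberg.measure_Htranslate_Qbox_le hc₀.le hAhlfors p hα hβ hr)

/-- If `μ` is upper Ahlfors regular on `ℍⁿ` (with exponent the
homogeneous dimension `Q = 2n+2`), then there is `c > 0` such that
`μ((ρ,τ)∘Q_{α,β}) ≤ c·α^{2n}·β` for every `(ρ,τ) ∈ ℍⁿ` and all `α, β ≥ 0`. -/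
theorem measure_translated_box_le
    (n : ℕ) (hn : 1 ≤ n) (μ : Measure (Heis n)) (c₀ : ℝ) (hc₀ : 0 < c₀)
    (hAhlfors : ∀ (p : Heis n) (r : ℝ), 0 < r →
      μ (Hball p r) ≤ ENNReal.ofReal (c₀ * r ^ (2 * n + 2))) :
    ∃ c > (0 : ℝ), ∀ (p : Heis n) (α β : ℝ), 0 ≤ α → 0 ≤ β →
      μ (Htranslate p (Qbox n α β)) ≤ ENNReal.ofReal (c * α ^ (2 * n) * β) :=
  measure_translated_box_le_general n μ c₀ hc₀ hAhlfors
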